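/- Let E be an exact category with enough projectives and P a projective cover of E. Then E is cartesian closed if and only if P has generalised weak simple products. -/

import Mathlib

open CategoryTheory Limits

namespace ExComp

universe v u

variable {E : Type u} [Category.{v} E]

/-- A regular epimorphism, as a property of a morphism. -/
def RegEpi {A B : E} (f : A ⟶ B) : Prop := Nonempty (RegularEpi f)

/-- An object is (regular) projective if its covariant hom functor sends regular
epimorphisms to surjections. -/
def RegProjective (X : E) : Prop :=
  ∀ ⦃A B : E⦄ (e : A ⟶ B), RegEpi e → ∀ f : X ⟶ B, ∃ g : X ⟶ A, g ≫ e = f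

/-- `E` has enough projectives: every object admits a regular epimorphism from a
projective object. -/
def EnoughRegProjectives (E : Type u) [Category.{v} E] : Prop :=
  ∀ A : E, ∃ (X : E) (p : X ⟶ A), RegProjective X ∧ RegEpi p

/-- An internal equivalence relation: a jointly monic, reflexive, symmetric and
transitive pair of parallel arrows. -/
structure IsEquivRelPair {R X : E} (r₁ r₂ : R ⟶ X) : Prop where
  jointlyMono : ∀ ⦃T : E⦄ (h k : T ⟶ R), h ≫ r₁ = k ≫ r₁ → h ≫ r₂ = k ≫ r₂ → h = k
  refl : ∃ d : X ⟶ R, d ≫ r₁ = 𝟙 X ∧ d ≫ r₂ = 𝟙 X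
  symm : ∃ s : R ⟶ R, s ≫ r₁ = r₂ ∧ s ≫ r₂ = r₁
  trans : ∀ ⦃T : E⦄ (p q : T ⟶ R), p ≫ r₂ = q ≫ r₁ →
    ∃ t : T ⟶ R, t ≫ r₁ = p ≫ r₁ ∧ t ≫ r₂ = q ≫ r₂

/-- An exact category: a finitely complete category where every morphism factors as a
regular epi followed by a mono, regular epis are stable under pullback, and every
internal equivalence relation is effective (it is the kernel pair of the coequaliser
it admits). -/
structure IsExact (E : Type u) [Category.{v} E] [HasFiniteLimits E] : Prop where
  factor : ∀ ⦃A B : E⦄ (f : A ⟶ B), ∃ (I : E) (e : A ⟶ I) (m : I ⟶ B),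
    RegEpi e ∧ Mono m ∧ e ≫ m = f
  stable : ∀ ⦃A B C : E⦄ (f : A ⟶ B) (g : C ⟶ B), RegEpi f → RegEpi (pullback.snd f g)
  effective : ∀ ⦃R X : E⦄ (r₁ r₂ : R ⟶ X), IsEquivRelPair r₁ r₂ →
    ∃ (Q : E) (q : X ⟶ Q) (w : r₁ ≫ q = r₂ ≫ q),
      Nonempty (IsColimit (Cofork.ofπ q w)) ∧ IsPullback r₁ r₂ q q

/-- A projective cover of `E`: a (full sub)collection of objects, each projective,
such that every object of `E` admits a regular epimorphism from one of them. -/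
def IsProjectiveCover (P : Set E) : Prop :=
  (∀ X ∈ P, RegProjective X) ∧ ∀ A : E, ∃ X ∈ P, ∃ p : X ⟶ A, RegEpi p

section FinLim
variable [HasFiniteLimits E]

/-- `X` is internally projective: every arrow `T ⨯ X ⟶ B` lifts along a regular epi
`A ↠ B` after passing to a regular epi `U ↠ T`. -/
def InternallyProjective (X : E) : Prop :=
  ∀ ⦃T A B : E⦄ (e : A ⟶ B), RegEpi e → ∀ f : T ⨯ X ⟶ B,
    ∃ (U : E) (u : U ⟶ T) (g : U ⨯ X ⟶ A), RegEpi u ∧ g ≫ e = prod.map u (𝟙 X) ≫ f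

/-- Cartesian closure, as a property: for every object `X` the functor `(−) ⨯ X` has a
right adjoint. -/
def CartesianClosedP (E : Type u) [Category.{v} E] [HasFiniteLimits E] : Prop :=
  ∀ X : E, (prod.functor.flip.obj X).IsLeftAdjoint

/-- Local cartesian closure, as a property: every slice is cartesian closed. -/
def LocallyCartesianClosedP (E : Type u) [Category.{v} E] [HasFiniteLimits E] : Prop :=
  ∀ (I : E) (F : Over I), ((prod.functor (C := Over I)).flip.obj F).IsLeftAdjoint

end FinLim

/-! ## Weak products and weak simple products -/

/-- A weak product in `P` of `X` and `Y`: a span through which every span in `P`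
factors (not necessarily uniquely). -/
structure IsWeakProduct (P : Set E) {X Y V : E} (p : V ⟶ X) (q : V ⟶ Y) : Prop where
  mem : V ∈ P
  lift : ∀ ⦃V' : E⦄, V' ∈ P → ∀ (p' : V' ⟶ X) (q' : V' ⟶ Y),
    ∃ h : V' ⟶ V, h ≫ p = p' ∧ h ≫ q = q'

/-- An arrow out of a weak product is determined by projections if it coequalises
every pair of arrows (from an object of `P`) coequalised by both projections. -/
def DeterminedByProjections (P : Set E) {V X Y Z : E} (p : V ⟶ X) (q : V ⟶ Y)
    (f : V ⟶ Z) : Prop :=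
  ∀ ⦃V' : E⦄, V' ∈ P → ∀ (h k : V' ⟶ V), h ≫ p = k ≫ p → h ≫ q = k ≫ q → h ≫ f = k ≫ f

/-- A candidate diagram for a weak simple product of a span `J ←f Y →g X`. -/
structure WSPCone (P : Set E) {J Y X : E} (f : Y ⟶ J) (g : Y ⟶ X)
    (W V : E) (w : W ⟶ J) (p : V ⟶ W) (q : V ⟶ X) (e : V ⟶ Y) : Prop where
  memW : W ∈ P
  wp : IsWeakProduct P p q
  det : DeterminedByProjections P p q e
  comm₁ : p ≫ w = e ≫ f
  comm₂ : q = e ≫ g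

/-- A weak simple product: a weakly terminal candidate diagram. -/
structure IsWeakSimpleProduct (P : Set E) {J Y X : E} (f : Y ⟶ J) (g : Y ⟶ X)
    (W V : E) (w : W ⟶ J) (p : V ⟶ W) (q : V ⟶ X) (e : V ⟶ Y) : Prop where
  cone : WSPCone P f g W V w p q e
  lift : ∀ ⦃W' V' : E⦄ (w' : W' ⟶ J) (p' : V' ⟶ W') (q' : V' ⟶ X) (e' : V' ⟶ Y),
    WSPCone P f g W' V' w' p' q' e' →
    ∃ (α : W' ⟶ W) (β : V' ⟶ V),
      α ≫ w = w' ∧ β ≫ p = p' ≫ α ∧ β ≫ q = q' ∧ β ≫ e = e'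

/-- `P` has weak simple products. -/
def HasWeakSimpleProducts (P : Set E) : Prop :=
  ∀ ⦃J Y X : E⦄, J ∈ P → Y ∈ P → X ∈ P → ∀ (f : Y ⟶ J) (g : Y ⟶ X),
    ∃ (W V : E) (w : W ⟶ J) (p : V ⟶ W) (q : V ⟶ X) (e : V ⟶ Y),
      IsWeakSimpleProduct P f g W V w p q e

/-! ## Pseudo simple products -/

/-- A candidate diagram for a pseudo simple product (no determinacy requirement). -/
structure PSPCone (P : Set E) {J Y X : E} (f : Y ⟶ J) (g : Y ⟶ X)
    (W V : E) (w : W ⟶ J) (p : V ⟶ W) (q : V ⟶ X) (e : V ⟶ Y) : Prop where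
  memW : W ∈ P
  wp : IsWeakProduct P p q
  comm₁ : p ≫ w = e ≫ f
  comm₂ : q = e ≫ g

/-- A pseudo simple product: a weakly terminal candidate diagram. -/
structure IsPseudoSimpleProduct (P : Set E) {J Y X : E} (f : Y ⟶ J) (g : Y ⟶ X)
    (W V : E) (w : W ⟶ J) (p : V ⟶ W) (q : V ⟶ X) (e : V ⟶ Y) : Prop where
  cone : PSPCone P f g W V w p q e
  lift : ∀ ⦃W' V' : E⦄ (w' : W' ⟶ J) (p' : V' ⟶ W') (q' : V' ⟶ X) (e' : V' ⟶ Y),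
    PSPCone P f g W' V' w' p' q' e' →
    ∃ (α : W' ⟶ W) (β : V' ⟶ V),
      α ≫ w = w' ∧ β ≫ p = p' ≫ α ∧ β ≫ q = q' ∧ β ≫ e = e'

/-- `P` has pseudo simple products. -/
def HasPseudoSimpleProducts (P : Set E) : Prop :=
  ∀ ⦃J Y X : E⦄, J ∈ P → Y ∈ P → X ∈ P → ∀ (f : Y ⟶ J) (g : Y ⟶ X),
    ∃ (W V : E) (w : W ⟶ J) (p : V ⟶ W) (q : V ⟶ X) (e : V ⟶ Y),
      IsPseudoSimpleProduct P f g W V w p q e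

/-! ## Weak exponentials -/

/-- A candidate diagram for a weak exponential of `X` and `Y`. -/
structure WExpCone (P : Set E) {X Y : E} (W V : E) (p : V ⟶ W) (q : V ⟶ X)
    (e : V ⟶ Y) : Prop where
  memW : W ∈ P
  wp : IsWeakProduct P p q
  det : DeterminedByProjections P p q e

/-- A weak exponential of `X` and `Y` in `P`. -/
structure IsWeakExponential (P : Set E) {X Y : E} (W V : E) (p : V ⟶ W) (q : V ⟶ X)
    (e : V ⟶ Y) : Prop where
  cone : WExpCone P W V p q e
  lift : ∀ ⦃W' V' : E⦄ (p' : V' ⟶ W') (q' : V' ⟶ X) (e' : V' ⟶ Y),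
    WExpCone P W' V' p' q' e' →
    ∃ (α : W' ⟶ W) (β : V' ⟶ V), β ≫ p = p' ≫ α ∧ β ≫ q = q' ∧ β ≫ e = e'

/-- `P` has weak exponentials. -/
def HasWeakExponentials (P : Set E) : Prop :=
  ∀ ⦃X Y : E⦄, X ∈ P → Y ∈ P →
    ∃ (W V : E) (p : V ⟶ W) (q : V ⟶ X) (e : V ⟶ Y), IsWeakExponential P W V p q e

/-- A quasi exponential of `X` and `B`: the weak universal property of an exponential
restricted to projective sources. -/
def IsQuasiExponential [HasFiniteLimits E] (P : Set E) (X : E) {B : E} (W : E)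
    (e : W ⨯ X ⟶ B) : Prop :=
  ∀ ⦃Z : E⦄, Z ∈ P → ∀ f : Z ⨯ X ⟶ B, ∃ g : Z ⟶ W, prod.map g (𝟙 X) ≫ e = f

section FinLim2
variable [HasFiniteLimits E]

/-! ## Pseudo equivalence relations, equalities and generalised weak (simple) products -/

/-- A pseudo equivalence relation: a pair of parallel arrows whose image in `E` is an
equivalence relation. -/
def IsPseudoEquivRel {Y1 Y0 : E} (y₁ y₂ : Y1 ⟶ Y0) : Prop :=
  ∃ (R : E) (e : Y1 ⟶ R) (m : R ⟶ Y0 ⨯ Y0), RegEpi e ∧ Mono m ∧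
    e ≫ m = prod.lift y₁ y₂ ∧ IsEquivRelPair (m ≫ prod.fst) (m ≫ prod.snd)

/-- An equality for a weak limit, relative to the comparison arrow `c : V0 ⟶ L` into
the actual limit: a pseudo equivalence relation `v₁, v₂ : V1 ⇉ V0` in `P` such that
`c` is a coequaliser of `v₁, v₂` and `V1` regularly covers the kernel pair of `c`. -/
structure IsEqualityFor (P : Set E) {V1 V0 L : E} (c : V0 ⟶ L) (v₁ v₂ : V1 ⟶ V0) :
    Prop where
  mem : V1 ∈ P
  per : IsPseudoEquivRel v₁ v₂
  w : v₁ ≫ c = v₂ ≫ c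
  coeq : Nonempty (IsColimit (Cofork.ofπ c w))
  cover : RegEpi (pullback.lift v₁ v₂ w)

/-- An arrow `e : V ⟶ Z0` out of a weak product with projections `p, q` preserves
projections with respect to a pseudo equivalence relation `z₁, z₂ : Z1 ⇉ Z0` if for
any equality `v₁, v₂ : V1 ⇉ V` for the weak product there is `t : V1 ⟶ Z1` with
`t ≫ zᵢ = vᵢ ≫ e`. -/
def PreservesProjWP (P : Set E) {V X Y Z1 Z0 : E} (p : V ⟶ X) (q : V ⟶ Y)
    (z₁ z₂ : Z1 ⟶ Z0) (e : V ⟶ Z0) : Prop :=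
  ∀ ⦃V1 : E⦄ (v₁ v₂ : V1 ⟶ V), IsEqualityFor P (prod.lift p q) v₁ v₂ →
    ∃ t : V1 ⟶ Z1, t ≫ z₁ = v₁ ≫ e ∧ t ≫ z₂ = v₂ ≫ e

/-- A candidate diagram for a generalised weak simple product of `f` and `g` with
respect to the pseudo equivalence relation `y₁, y₂`. -/
structure GWSPCone (P : Set E) {Y1 Y0 J X : E} (y₁ y₂ : Y1 ⟶ Y0) (f : Y0 ⟶ J)
    (g : Y0 ⟶ X) (W V : E) (w : W ⟶ J) (p : V ⟶ W) (q : V ⟶ X) (e : V ⟶ Y0) :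
    Prop where
  memW : W ∈ P
  wp : IsWeakProduct P p q
  pres : PreservesProjWP P p q y₁ y₂ e
  comm₁ : p ≫ w = e ≫ f
  comm₂ : q = e ≫ g

/-- A generalised weak simple product: a weakly terminal candidate diagram. -/
structure IsGWSP (P : Set E) {Y1 Y0 J X : E} (y₁ y₂ : Y1 ⟶ Y0) (f : Y0 ⟶ J)
    (g : Y0 ⟶ X) (W V : E) (w : W ⟶ J) (p : V ⟶ W) (q : V ⟶ X) (e : V ⟶ Y0) :
    Prop where
  cone : GWSPCone P y₁ y₂ f g W V w p q e
  lift : ∀ ⦃W' V' : E⦄ (w' : W' ⟶ J) (p' : V' ⟶ W') (q' : V' ⟶ X) (e' : V' ⟶ Y0),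
    GWSPCone P y₁ y₂ f g W' V' w' p' q' e' →
    ∃ (α : W' ⟶ W) (β : V' ⟶ V),
      α ≫ w = w' ∧ β ≫ p = p' ≫ α ∧ β ≫ q = q' ∧ β ≫ e = e'

/-- `P` has generalised weak simple products. -/
def HasGWSP (P : Set E) : Prop :=
  ∀ ⦃Y1 Y0 J X : E⦄, Y1 ∈ P → Y0 ∈ P → J ∈ P → X ∈ P →
    ∀ (y₁ y₂ : Y1 ⟶ Y0), IsPseudoEquivRel y₁ y₂ →
    ∀ (f : Y0 ⟶ J) (g : Y0 ⟶ X), y₁ ≫ f = y₂ ≫ f → y₁ ≫ g = y₂ ≫ g →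
    ∃ (W V : E) (w : W ⟶ J) (p : V ⟶ W) (q : V ⟶ X) (e : V ⟶ Y0),
      IsGWSP P y₁ y₂ f g W V w p q e

/-- A candidate diagram for a generalised weak exponential of `X` and `y₁, y₂`. -/
structure GWExpCone (P : Set E) {X Y1 Y0 : E} (y₁ y₂ : Y1 ⟶ Y0)
    (W V : E) (p : V ⟶ W) (q : V ⟶ X) (e : V ⟶ Y0) : Prop where
  memW : W ∈ P
  wp : IsWeakProduct P p q
  pres : PreservesProjWP P p q y₁ y₂ e

/-- A generalised weak exponential of `X` and a pseudo equivalence relation. -/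
structure IsGWExp (P : Set E) {X Y1 Y0 : E} (y₁ y₂ : Y1 ⟶ Y0)
    (W V : E) (p : V ⟶ W) (q : V ⟶ X) (e : V ⟶ Y0) : Prop where
  cone : GWExpCone P y₁ y₂ W V p q e
  lift : ∀ ⦃W' V' : E⦄ (p' : V' ⟶ W') (q' : V' ⟶ X) (e' : V' ⟶ Y0),
    GWExpCone P y₁ y₂ W' V' p' q' e' →
    ∃ (α : W' ⟶ W) (β : V' ⟶ V), β ≫ p = p' ≫ α ∧ β ≫ q = q' ∧ β ≫ e = e'

/-! ## Weak pullbacks and generalised weak dependent products -/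

/-- A weak pullback in `P` of the cospan `X →f J ←w W`. -/
structure IsWeakPullback (P : Set E) {X J W V : E} (f : X ⟶ J) (w : W ⟶ J)
    (a : V ⟶ X) (b : V ⟶ W) : Prop where
  mem : V ∈ P
  comm : a ≫ f = b ≫ w
  lift : ∀ ⦃V' : E⦄, V' ∈ P → ∀ (a' : V' ⟶ X) (b' : V' ⟶ W), a' ≫ f = b' ≫ w →
    ∃ h : V' ⟶ V, h ≫ a = a' ∧ h ≫ b = b'

/-- Preservation of projections for an arrow out of a weak pullback. -/
def PreservesProjWPB (P : Set E) {V X J W Z1 Z0 : E} (f : X ⟶ J) (w : W ⟶ J)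
    (a : V ⟶ X) (b : V ⟶ W) (h : a ≫ f = b ≫ w) (z₁ z₂ : Z1 ⟶ Z0) (e : V ⟶ Z0) :
    Prop :=
  ∀ ⦃V1 : E⦄ (v₁ v₂ : V1 ⟶ V), IsEqualityFor P (pullback.lift a b h) v₁ v₂ →
    ∃ t : V1 ⟶ Z1, t ≫ z₁ = v₁ ≫ e ∧ t ≫ z₂ = v₂ ≫ e

/-- A candidate diagram for a generalised weak dependent product of `g : Y0 ⟶ X`
along `f : X ⟶ J` with respect to `y₁, y₂`. -/
structure GWDPCone (P : Set E) {Y1 Y0 X J : E} (y₁ y₂ : Y1 ⟶ Y0) (g : Y0 ⟶ X)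
    (f : X ⟶ J) (W V : E) (w : W ⟶ J) (a : V ⟶ X) (b : V ⟶ W) (e : V ⟶ Y0) :
    Prop where
  memW : W ∈ P
  comm : a ≫ f = b ≫ w
  wpb : IsWeakPullback P f w a b
  overX : e ≫ g = a
  pres : PreservesProjWPB P f w a b comm y₁ y₂ e

/-- A generalised weak dependent product: a weakly terminal candidate diagram. -/
structure IsGWDP (P : Set E) {Y1 Y0 X J : E} (y₁ y₂ : Y1 ⟶ Y0) (g : Y0 ⟶ X)
    (f : X ⟶ J) (W V : E) (w : W ⟶ J) (a : V ⟶ X) (b : V ⟶ W) (e : V ⟶ Y0) :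
    Prop where
  cone : GWDPCone P y₁ y₂ g f W V w a b e
  lift : ∀ ⦃W' V' : E⦄ (w' : W' ⟶ J) (a' : V' ⟶ X) (b' : V' ⟶ W') (e' : V' ⟶ Y0),
    GWDPCone P y₁ y₂ g f W' V' w' a' b' e' →
    ∃ (α : W' ⟶ W) (β : V' ⟶ V),
      α ≫ w = w' ∧ β ≫ a = a' ∧ β ≫ b = b' ≫ α ∧ β ≫ e = e'

/-- `P` has generalised weak dependent products (i.e. `P` is weakly locally cartesian
closed). -/
def HasGWDP (P : Set E) : Prop :=
  ∀ ⦃Y1 Y0 X J : E⦄, Y1 ∈ P → Y0 ∈ P → X ∈ P → J ∈ P →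
    ∀ (y₁ y₂ : Y1 ⟶ Y0), IsPseudoEquivRel y₁ y₂ →
    ∀ (g : Y0 ⟶ X) (f : X ⟶ J), y₁ ≫ g = y₂ ≫ g →
    ∃ (W V : E) (w : W ⟶ J) (a : V ⟶ X) (b : V ⟶ W) (e : V ⟶ Y0),
      IsGWDP P y₁ y₂ g f W V w a b e

/-! ## The functor `w_X` on subobjects induced by weak simple products -/

/-- The adjunction property of the weak-simple-product operation `w_X` on subobjects:
for every subobject `a : A ↪ J ⨯ X`, every `P`-cover `Y ↠ A`, every weak simple
product `W → J` of the induced span and every image factorisation `W ↠ I ↪ J` of it,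
the subobject `I ↪ J` is a value at `a` of a right adjoint to
`(−) ⨯ X : Sub(J) → Sub(J ⨯ X)`. -/
def WAdj (P : Set E) (J X : E) : Prop :=
  ∀ ⦃A : E⦄ (a : A ⟶ J ⨯ X), Mono a →
  ∀ ⦃Y : E⦄, Y ∈ P → ∀ (c : Y ⟶ A), RegEpi c →
  ∀ ⦃W V : E⦄ (w : W ⟶ J) (p : V ⟶ W) (q : V ⟶ X) (e : V ⟶ Y),
    IsWeakSimpleProduct P (c ≫ a ≫ prod.fst) (c ≫ a ≫ prod.snd) W V w p q e →
  ∀ ⦃I : E⦄ (ew : W ⟶ I) (m : I ⟶ J), RegEpi ew → Mono m → ew ≫ m = w →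
  ∀ ⦃B : E⦄ (b : B ⟶ J), Mono b →
    ((∃ t : B ⨯ X ⟶ A, t ≫ a = prod.map b (𝟙 X)) ↔ ∃ s : B ⟶ I, s ≫ m = b)

/-! ## Weak dependent products (à la Carboni–Rosolini) -/

/-- `P` has weak dependent products: for `f : X ⟶ J` and `g : Y ⟶ X` in `P` there are
`w : W ⟶ J` in `P` and a surjection `Hom_{P/J}(h, w) → Hom_{P/X}(f*(h), g)` natural
in `h ∈ P/J`. -/
def HasWeakDependentProducts (P : Set E) : Prop :=
  ∀ ⦃X J Y : E⦄, X ∈ P → J ∈ P → Y ∈ P → ∀ (f : X ⟶ J) (g : Y ⟶ X),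
    ∃ (W : E) (_ : W ∈ P) (w : W ⟶ J)
      (ε : ∀ ⦃T : E⦄, T ∈ P → ∀ (h : T ⟶ J) (k : T ⟶ W), k ≫ w = h →
        (pullback h f ⟶ Y)),
      (∀ ⦃T : E⦄ (hT : T ∈ P) (h : T ⟶ J) (k : T ⟶ W) (hk : k ≫ w = h),
         ε hT h k hk ≫ g = pullback.snd h f) ∧
      (∀ ⦃T : E⦄ (hT : T ∈ P) (h : T ⟶ J) (d : pullback h f ⟶ Y),
         d ≫ g = pullback.snd h f → ∃ (k : T ⟶ W) (hk : k ≫ w = h), ε hT h k hk = d) ∧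
      (∀ ⦃T' T : E⦄ (hT' : T' ∈ P) (hT : T ∈ P) (u : T' ⟶ T) (h : T ⟶ J) (k : T ⟶ W)
         (hk : k ≫ w = h),
         ε hT' (u ≫ h) (u ≫ k) (by rw [Category.assoc, hk]) =
           pullback.map (u ≫ h) f h f u (𝟙 X) (𝟙 J) (by simp) (by simp) ≫ ε hT h k hk)

end FinLim2

/-!
Both sides are equivalent to the existence of weak dependent products `IsWeakPi`, with vertex
in `P`, along product projections `J ⨯ X ⟶ J`. An arrow out of a weak product preserves
projections for a pseudo equivalence relation exactly when its composite with the quotient `μ`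
of the relation descends to the product; so a generalised weak simple product of `f, g` is a weak
dependent product of the arrow `M ⟶ J ⨯ X` that they induce on the quotient, presented by a
weak pullback along `μ`. In a cartesian closed category the dependent product exists (an
equalizer in `J ⨯ M^X`), and a `P`-cover of it is a weak one. Conversely, weak dependent
products give universal quantification of subobjects along product projections, and quasi
exponentials `W ⨯ X₀ ⟶ B` for `P`-covers `X₀ ↠ X`. The exponential `B^X` is then the quotient,
by extensional equality, of the part of `W` well defined on `X`: both are universal
quantifications, and exactness provides the quotient.
-/

attribute [local simp] prod.lift_fst prod.lift_snd prod.lift_fst_assoc prod.lift_snd_assoc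
  pullback.lift_fst pullback.lift_snd pullback.lift_fst_assoc pullback.lift_snd_assoc

variable {E : Type u} [Category.{v} E]

section RegularEpi

lemma RegEpi.strongEpi {A B : E} {f : A ⟶ B} (h : RegEpi f) : StrongEpi f := by
  obtain ⟨h⟩ := h
  have := isRegularEpi_of_regularEpi h
  infer_instance

lemma RegEpi.epi {A B : E} {f : A ⟶ B} (h : RegEpi f) : Epi f :=
  h.strongEpi.epi

lemma regEpi_of_isIso {A B : E} (f : A ⟶ B) [IsIso f] : RegEpi f :=
  ⟨RegularEpi.ofIso (asIso f)⟩

lemma regEpi_of_isColimit {R A B : E} {r₁ r₂ : R ⟶ A} {q : A ⟶ B} {w : r₁ ≫ q = r₂ ≫ q}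
    (h : IsColimit (Cofork.ofπ q w)) : RegEpi q :=
  ⟨Cofork.IsColimit.regularEpi h⟩

lemma RegEpi.exists_desc {A B Z : E} {q : A ⟶ B} (hq : RegEpi q) (h : A ⟶ Z)
    (hh : ∀ ⦃T : E⦄ (a b : T ⟶ A), a ≫ q = b ≫ q → a ≫ h = b ≫ h) :
    ∃ l : B ⟶ Z, q ≫ l = h := by
  obtain ⟨hq⟩ := hq
  have := isRegularEpi_of_regularEpi hq
  exact ⟨EffectiveEpi.desc q h fun a b => hh a b, EffectiveEpi.fac q h _⟩

lemma RegEpi.exists_fac_of_mono {A B C D : E} {u : A ⟶ B} (hu : RegEpi u) {m : C ⟶ D}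
    [Mono m] {a : A ⟶ C} {b : B ⟶ D} (h : a ≫ m = u ≫ b) : ∃ d : B ⟶ C, d ≫ m = b := by
  have := hu.strongEpi
  exact ⟨(CommSq.mk h).lift, CommSq.fac_right _⟩

end RegularEpi

namespace IsExact

variable [HasFiniteLimits E] (hE : IsExact E)
include hE

lemma regEpi_of_strongEpi {A B : E} (f : A ⟶ B) [StrongEpi f] : RegEpi f := by
  obtain ⟨I, e, m, ⟨he⟩, hm, rfl⟩ := hE.factor f
  have := strongEpi_of_strongEpi e m
  have := isIso_of_mono_of_strongEpi m
  exact ⟨RegularEpi.ofArrowIso (f := e) (Arrow.isoMk (Iso.refl _) (asIso m)) he⟩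

lemma regEpi_comp {A B C : E} {f : A ⟶ B} {g : B ⟶ C} (hf : RegEpi f) (hg : RegEpi g) :
    RegEpi (f ≫ g) := by
  have := hf.strongEpi
  have := hg.strongEpi
  exact hE.regEpi_of_strongEpi _

lemma regEpi_of_comp {A B C : E} {f : A ⟶ B} {g : B ⟶ C} (h : RegEpi (f ≫ g)) : RegEpi g := by
  have := h.strongEpi
  have := strongEpi_of_strongEpi f g
  exact hE.regEpi_of_strongEpi g

lemma regEpi_of_isPullback {P' A B C : E} {fst : P' ⟶ A} {snd : P' ⟶ C} {f : A ⟶ B}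
    {g : C ⟶ B} (sq : IsPullback fst snd f g) (hf : RegEpi f) : RegEpi snd := by
  rw [← sq.isoPullback_hom_snd]
  exact hE.regEpi_comp (regEpi_of_isIso _) (hE.stable f g hf)

lemma regEpi_prodMap {A B C D : E} {u : A ⟶ B} {v : C ⟶ D} (hu : RegEpi u) (hv : RegEpi v) :
    RegEpi (prod.map u v) := by
  have hu' := hE.regEpi_of_isPullback (IsPullback.of_prod_fst_with_id u C) hu
  have hv' := hE.regEpi_of_isPullback (IsPullback.of_prod_fst_with_id v B) hv
  have hv'' : prod.map (𝟙 B) v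
      = (prod.braiding B C).hom ≫ prod.map v (𝟙 B) ≫ (prod.braiding D B).hom := by
    ext <;> simp
  have : prod.map u v = prod.map u (𝟙 C) ≫ prod.map (𝟙 B) v := by simp
  rw [this, hv'']
  exact hE.regEpi_comp hu' (hE.regEpi_comp (regEpi_of_isIso _)
    (hE.regEpi_comp hv' (regEpi_of_isIso _)))

end IsExact

section KernelPairCover

variable [HasFiniteLimits E]

lemma isEquivRelPair_kernelPair {A B : E} (f : A ⟶ B) :
    IsEquivRelPair (pullback.fst f f) (pullback.snd f f) where
  jointlyMono _ _ _ h₁ h₂ := pullback.hom_ext h₁ h₂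
  refl := ⟨pullback.lift (𝟙 A) (𝟙 A) rfl, by simp, by simp⟩
  symm := ⟨pullback.lift _ _ pullback.condition.symm, by simp, by simp⟩
  trans T p q hpq := ⟨pullback.lift (p ≫ pullback.fst f f) (q ≫ pullback.snd f f)
    (by simp only [Category.assoc, ← pullback.condition]; rw [← reassoc_of% hpq,
      pullback.condition]), by simp, by simp⟩

structure IsKernelPairCover {Y1 Y0 M : E} (y₁ y₂ : Y1 ⟶ Y0) (μ : Y0 ⟶ M) : Prop where
  condition : y₁ ≫ μ = y₂ ≫ μ
  regEpi_lift : RegEpi (pullback.lift y₁ y₂ condition)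

lemma exists_isKernelPairCover {P : Set E} (hP : IsProjectiveCover P) {Y0 M : E}
    (μ : Y0 ⟶ M) : ∃ Y1 ∈ P, ∃ y₁ y₂ : Y1 ⟶ Y0, IsKernelPairCover y₁ y₂ μ := by
  obtain ⟨Y1, hY1, c, hc⟩ := hP.2 (pullback μ μ)
  have hlift : pullback.lift (c ≫ pullback.fst μ μ) (c ≫ pullback.snd μ μ)
      (by simp [pullback.condition]) = c := by
    ext <;> simp
  exact ⟨Y1, hY1, _, _, ⟨_, hlift ▸ hc⟩⟩

namespace IsKernelPairCover

variable {Y1 Y0 M : E} {y₁ y₂ : Y1 ⟶ Y0} {μ : Y0 ⟶ M} (h : IsKernelPairCover y₁ y₂ μ)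
include h

lemma isPseudoEquivRel : IsPseudoEquivRel y₁ y₂ := by
  refine ⟨pullback μ μ, _, prod.lift (pullback.fst μ μ) (pullback.snd μ μ), h.regEpi_lift,
    ⟨fun a b hab => pullback.hom_ext (by simpa using hab =≫ prod.fst)
      (by simpa using hab =≫ prod.snd)⟩, by ext <;> simp, ?_⟩
  simpa using isEquivRelPair_kernelPair μ

lemma exists_lift {T : E} (hT : RegProjective T) {a b : T ⟶ Y0} (hab : a ≫ μ = b ≫ μ) :
    ∃ t : T ⟶ Y1, t ≫ y₁ = a ∧ t ≫ y₂ = b := by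
  obtain ⟨t, ht⟩ := hT _ h.regEpi_lift (pullback.lift a b hab)
  exact ⟨t, by simpa using ht =≫ pullback.fst μ μ, by simpa using ht =≫ pullback.snd μ μ⟩

lemma comp_eq_comp {Z : E} {f : Y0 ⟶ Z} (hf : y₁ ≫ f = y₂ ≫ f) {T : E} {a b : T ⟶ Y0}
    (hab : a ≫ μ = b ≫ μ) : a ≫ f = b ≫ f := by
  have := h.regEpi_lift.epi
  have hker : pullback.fst μ μ ≫ f = pullback.snd μ μ ≫ f := by
    rw [← cancel_epi (pullback.lift y₁ y₂ h.condition)]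
    simpa using hf
  simpa using pullback.lift a b hab ≫= hker

lemma nonempty_isColimit (hμ : RegEpi μ) : Nonempty (IsColimit (Cofork.ofπ μ h.condition)) := by
  obtain ⟨hμ'⟩ := hμ
  have := isRegularEpi_of_regularEpi hμ'
  exact ⟨Cofork.IsColimit.mk _
    (fun s => EffectiveEpi.desc μ s.π fun _ _ => h.comp_eq_comp s.condition)
    (fun s => EffectiveEpi.fac μ s.π _) (fun s m hm => EffectiveEpi.uniq μ s.π _ m hm)⟩

end IsKernelPairCover

lemma IsPseudoEquivRel.exists_isKernelPairCover (hE : IsExact E) {Y1 Y0 : E}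
    {y₁ y₂ : Y1 ⟶ Y0} (h : IsPseudoEquivRel y₁ y₂) :
    ∃ (M : E) (μ : Y0 ⟶ M), RegEpi μ ∧ IsKernelPairCover y₁ y₂ μ := by
  obtain ⟨R, e, m, he, -, hem, hR⟩ := h
  obtain ⟨M, μ, w, ⟨hμ⟩, hker⟩ := hE.effective _ _ hR
  have hy₁ : y₁ = e ≫ m ≫ prod.fst := by simp [reassoc_of% hem]
  have hy₂ : y₂ = e ≫ m ≫ prod.snd := by simp [reassoc_of% hem]
  subst hy₁ hy₂
  refine ⟨M, μ, regEpi_of_isColimit hμ, ⟨by simp [w], ?_⟩⟩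
  convert hE.regEpi_comp he (regEpi_of_isIso hker.isoPullback.hom)
  ext <;> simp

lemma exists_isEqualityFor {P : Set E} (hP : IsProjectiveCover P) {V L : E} {c : V ⟶ L}
    (hc : RegEpi c) : ∃ (V1 : E) (v₁ v₂ : V1 ⟶ V), IsEqualityFor P c v₁ v₂ := by
  obtain ⟨V1, hV1, v₁, v₂, h⟩ := exists_isKernelPairCover hP c
  exact ⟨V1, v₁, v₂, hV1, h.isPseudoEquivRel, h.condition, h.nonempty_isColimit hc,
    h.regEpi_lift⟩

end KernelPairCover

section WeakLimits

variable [HasFiniteLimits E] {P : Set E}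

lemma isWeakProduct_of_regEpi (hP : ∀ Z ∈ P, RegProjective Z) {V X Y : E} (hV : V ∈ P)
    {c : V ⟶ X ⨯ Y} (hc : RegEpi c) : IsWeakProduct P (c ≫ prod.fst) (c ≫ prod.snd) := by
  refine ⟨hV, fun V' hV' p' q' => ?_⟩
  obtain ⟨h, hh⟩ := hP V' hV' c hc (prod.lift p' q')
  exact ⟨h, by simp [reassoc_of% hh], by simp [reassoc_of% hh]⟩

lemma IsWeakProduct.regEpi_lift (hE : IsExact E) (hP : IsProjectiveCover P) {V X Y : E}
    {p : V ⟶ X} {q : V ⟶ Y} (h : IsWeakProduct P p q) : RegEpi (prod.lift p q) := by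
  obtain ⟨U, hU, c, hc⟩ := hP.2 (X ⨯ Y)
  obtain ⟨u, hu₁, hu₂⟩ := h.lift hU (c ≫ prod.fst) (c ≫ prod.snd)
  have : u ≫ prod.lift p q = c := by ext <;> simp [hu₁, hu₂]
  exact hE.regEpi_of_comp (f := u) (this ▸ hc)

lemma exists_isWeakPullback_of_regEpi (hE : IsExact E) (hP : IsProjectiveCover P)
    {X J W : E} {f : X ⟶ J} (hf : RegEpi f) (g : W ⟶ J) :
    ∃ (V : E) (a : V ⟶ X) (b : V ⟶ W), IsWeakPullback P f g a b ∧ RegEpi b := by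
  obtain ⟨V, hV, c, hc⟩ := hP.2 (pullback f g)
  refine ⟨V, c ≫ pullback.fst f g, c ≫ pullback.snd f g,
    ⟨hV, by simp [pullback.condition], fun V' hV' a' b' hab => ?_⟩,
    hE.regEpi_comp hc (hE.stable f g hf)⟩
  obtain ⟨h, hh⟩ := hP.1 V' hV' c hc (pullback.lift a' b' hab)
  exact ⟨h, by simp [reassoc_of% hh], by simp [reassoc_of% hh]⟩

end WeakLimits

section WeakPi

variable [HasFiniteLimits E]

/-- `w` and `l` present, weakly and with respect to test objects in `P`, the dependent
product of `k : M ⟶ J ⨯ X` along the projection `J ⨯ X ⟶ J`: `l` is a family over `J ⨯ X`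
of elements of `M`, and every such family indexed by an object of `P` is reindexed from it. -/
def IsWeakPi (P : Set E) {M J X W : E} (k : M ⟶ J ⨯ X) (w : W ⟶ J) (l : W ⨯ X ⟶ M) :
    Prop :=
  l ≫ k = prod.map w (𝟙 X) ∧
    ∀ ⦃W' : E⦄, W' ∈ P → ∀ (w' : W' ⟶ J) (l' : W' ⨯ X ⟶ M), l' ≫ k = prod.map w' (𝟙 X) →
      ∃ α : W' ⟶ W, α ≫ w = w' ∧ prod.map α (𝟙 X) ≫ l = l'

def HasWeakPis (P : Set E) : Prop :=
  ∀ ⦃J X : E⦄, J ∈ P → X ∈ P → ∀ ⦃M : E⦄ (k : M ⟶ J ⨯ X),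
    ∃ W ∈ P, ∃ (w : W ⟶ J) (l : W ⨯ X ⟶ M), IsWeakPi P k w l

variable {P : Set E} (hE : IsExact E) (hP : IsProjectiveCover P)
variable {Y1 Y0 M J X : E} {y₁ y₂ : Y1 ⟶ Y0} {μ : Y0 ⟶ M}
include hE hP

lemma IsKernelPairCover.preservesProjWP_iff (h : IsKernelPairCover y₁ y₂ μ) {V A B : E}
    {p : V ⟶ A} {q : V ⟶ B} (hpq : IsWeakProduct P p q) (e : V ⟶ Y0) :
    PreservesProjWP P p q y₁ y₂ e ↔ ∃ l : A ⨯ B ⟶ M, prod.lift p q ≫ l = e ≫ μ := by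
  constructor
  · intro hpres
    obtain ⟨V1, v₁, v₂, heq⟩ := exists_isEqualityFor hP (hpq.regEpi_lift hE hP)
    obtain ⟨t, ht₁, ht₂⟩ := hpres v₁ v₂ heq
    have hv : v₁ ≫ e ≫ μ = v₂ ≫ e ≫ μ := by
      rw [← reassoc_of% ht₁, ← reassoc_of% ht₂, h.condition]
    exact ⟨_, Cofork.IsColimit.π_desc' heq.coeq.some _ hv⟩
  · rintro ⟨l, hl⟩ V1 v₁ v₂ heq
    exact h.exists_lift (hP.1 V1 heq.mem) (by simp only [Category.assoc, ← hl,
      reassoc_of% heq.w])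

lemma gwspCone_of_isWeakPullback (h : IsKernelPairCover y₁ y₂ μ) {k : M ⟶ J ⨯ X}
    {W V : E} (hW : W ∈ P) {w : W ⟶ J} {l : W ⨯ X ⟶ M} (hl : l ≫ k = prod.map w (𝟙 X))
    {e : V ⟶ Y0} {b : V ⟶ W ⨯ X} (hV : IsWeakPullback P μ l e b) (hb : RegEpi b) :
    GWSPCone P y₁ y₂ (μ ≫ k ≫ prod.fst) (μ ≫ k ≫ prod.snd) W V w (b ≫ prod.fst)
      (b ≫ prod.snd) e := by
  have hpq := isWeakProduct_of_regEpi hP.1 hV.mem hb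
  have hek : e ≫ μ ≫ k = b ≫ prod.map w (𝟙 X) := by rw [reassoc_of% hV.comm, hl]
  refine ⟨hW, hpq, (h.preservesProjWP_iff hE hP hpq e).2 ⟨l, ?_⟩, ?_, ?_⟩
  · rw [show prod.lift (b ≫ prod.fst) (b ≫ prod.snd) = b by ext <;> simp]
    exact hV.comm.symm
  · simpa using (hek =≫ prod.fst).symm
  · simpa using (hek =≫ prod.snd).symm

lemma GWSPCone.exists_section (h : IsKernelPairCover y₁ y₂ μ) {k : M ⟶ J ⨯ X} {W V : E}
    {w : W ⟶ J} {p : V ⟶ W} {q : V ⟶ X} {e : V ⟶ Y0}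
    (hc : GWSPCone P y₁ y₂ (μ ≫ k ≫ prod.fst) (μ ≫ k ≫ prod.snd) W V w p q e) :
    ∃ l : W ⨯ X ⟶ M, prod.lift p q ≫ l = e ≫ μ ∧ l ≫ k = prod.map w (𝟙 X) := by
  obtain ⟨l, hl⟩ := (h.preservesProjWP_iff hE hP hc.wp e).1 hc.pres
  refine ⟨l, hl, ?_⟩
  have := (hc.wp.regEpi_lift hE hP).epi
  rw [← cancel_epi (prod.lift p q), reassoc_of% hl]
  ext
  · simp [hc.comm₁]
  · simp [hc.comm₂]

lemma IsGWSP.exists_isWeakPi (h : IsKernelPairCover y₁ y₂ μ) (hμ : RegEpi μ)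
    {k : M ⟶ J ⨯ X} {W V : E} {w : W ⟶ J} {p : V ⟶ W} {q : V ⟶ X} {e : V ⟶ Y0}
    (hG : IsGWSP P y₁ y₂ (μ ≫ k ≫ prod.fst) (μ ≫ k ≫ prod.snd) W V w p q e) :
    ∃ l : W ⨯ X ⟶ M, IsWeakPi P k w l := by
  obtain ⟨l, hlpq, hl⟩ := hG.cone.exists_section hE hP h
  refine ⟨l, hl, fun W' hW' w' l' hl' => ?_⟩
  obtain ⟨V', e', b', hV', hb'⟩ := exists_isWeakPullback_of_regEpi hE hP hμ l'
  obtain ⟨α, β, hαw, hβp, hβq, hβe⟩ :=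
    hG.lift w' _ _ e' (gwspCone_of_isWeakPullback hE hP h hW' hl' hV' hb')
  refine ⟨α, hαw, ?_⟩
  have := hb'.epi
  have hb'lift : b' ≫ prod.map α (𝟙 X) = β ≫ prod.lift p q := by ext <;> simp [hβp, hβq]
  rw [← cancel_epi b', reassoc_of% hb'lift, hlpq, reassoc_of% hβe, hV'.comm]

lemma IsWeakPi.exists_isGWSP (h : IsKernelPairCover y₁ y₂ μ) (hμ : RegEpi μ)
    {k : M ⟶ J ⨯ X} {W : E} (hW : W ∈ P) {w : W ⟶ J} {l : W ⨯ X ⟶ M}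
    (hl : IsWeakPi P k w l) :
    ∃ (V : E) (p : V ⟶ W) (q : V ⟶ X) (e : V ⟶ Y0),
      IsGWSP P y₁ y₂ (μ ≫ k ≫ prod.fst) (μ ≫ k ≫ prod.snd) W V w p q e := by
  obtain ⟨V, e, b, hV, hb⟩ := exists_isWeakPullback_of_regEpi hE hP hμ l
  refine ⟨V, _, _, e, gwspCone_of_isWeakPullback hE hP h hW hl.1 hV hb,
    fun W' V' w' p' q' e' hc => ?_⟩
  obtain ⟨l', hl'pq, hl'⟩ := hc.exists_section hE hP h
  obtain ⟨α, hαw, hαl⟩ := hl.2 hc.memW w' l' hl'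
  obtain ⟨β, hβe, hβb⟩ := hV.lift hc.wp.mem e' (prod.lift (p' ≫ α) q') (by
    rw [← hl'pq, ← hαl, prod.lift_map_assoc, Category.comp_id])
  exact ⟨α, β, hαw, by simpa using hβb =≫ prod.fst, by simpa using hβb =≫ prod.snd, hβe⟩

lemma hasWeakPis_of_hasGWSP (h : HasGWSP P) : HasWeakPis P := by
  intro J X hJ hX M k
  obtain ⟨Y0, hY0, μ, hμ⟩ := hP.2 M
  obtain ⟨Y1, hY1, y₁, y₂, hcov⟩ := exists_isKernelPairCover hP μ
  obtain ⟨W, V, w, p, q, e, hG⟩ := h hY1 hY0 hJ hX y₁ y₂ hcov.isPseudoEquivRel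
    (μ ≫ k ≫ prod.fst) (μ ≫ k ≫ prod.snd) (by rw [reassoc_of% hcov.condition])
    (by rw [reassoc_of% hcov.condition])
  exact ⟨W, hG.cone.memW, w, hG.exists_isWeakPi hE hP hcov hμ⟩

lemma hasGWSP_of_hasWeakPis (h : HasWeakPis P) : HasGWSP P := by
  intro Y1 Y0 J X _ _ hJ hX y₁ y₂ hper f g hf hg
  obtain ⟨M, μ, hμ, hcov⟩ := hper.exists_isKernelPairCover hE
  obtain ⟨f', rfl⟩ := hμ.exists_desc f fun _ _ _ => hcov.comp_eq_comp hf
  obtain ⟨g', rfl⟩ := hμ.exists_desc g fun _ _ _ => hcov.comp_eq_comp hg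
  obtain ⟨W, hW, w, l, hl⟩ := h hJ hX (prod.lift f' g')
  obtain ⟨V, p, q, e, hG⟩ := hl.exists_isGWSP hE hP hcov hμ hW
  exact ⟨W, V, w, p, q, e, by simpa using hG⟩

end WeakPi

section CartesianClosed

variable [HasFiniteLimits E]

lemma CartesianClosedP.exists_homEquiv (hCC : CartesianClosedP E) (X : E) :
    ∃ (R : E ⥤ E) (e : ∀ T B : E, (T ⨯ X ⟶ B) ≃ (T ⟶ R.obj B)),
      (∀ ⦃T' T B : E⦄ (f : T' ⟶ T) (g : T ⨯ X ⟶ B),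
        e T' B (prod.map f (𝟙 X) ≫ g) = f ≫ e T B g) ∧
      ∀ ⦃T B B' : E⦄ (f : T ⨯ X ⟶ B) (g : B ⟶ B'), e T B' (f ≫ g) = e T B f ≫ R.map g := by
  obtain ⟨R, ⟨adj⟩⟩ := (hCC X).exists_rightAdjoint
  exact ⟨R, adj.homEquiv, fun _ _ _ => adj.homEquiv_naturality_left,
    fun _ _ _ => adj.homEquiv_naturality_right⟩

/-- The dependent product is the equalizer carving out of `J ⨯ M^X` the pairs `(j, σ)` with
`σ : X ⟶ M` a section of `k` over `{j} ⨯ X`. -/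
lemma CartesianClosedP.exists_isWeakPi_univ (hCC : CartesianClosedP E) {M J X : E}
    (k : M ⟶ J ⨯ X) : ∃ (S : E) (s : S ⟶ J) (u : S ⨯ X ⟶ M), IsWeakPi Set.univ k s u := by
  obtain ⟨R, e, he_left, he_right⟩ := hCC.exists_homEquiv X
  let Φ : J ⨯ R.obj M ⟶ R.obj (J ⨯ X) := prod.snd ≫ R.map k
  let Ψ : J ⨯ R.obj M ⟶ R.obj (J ⨯ X) := e _ _ (prod.map prod.fst (𝟙 X))
  have hΦΨ : ∀ {T : E} (t : T ⟶ J) (σ : T ⟶ R.obj M),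
      prod.lift t σ ≫ Φ = prod.lift t σ ≫ Ψ ↔ (e T M).symm σ ≫ k = prod.map t (𝟙 X) := by
    intro T t σ
    have hΦ : prod.lift t σ ≫ Φ = e T _ ((e T M).symm σ ≫ k) := by simp [Φ, he_right]
    have hΨ : prod.lift t σ ≫ Ψ = e T _ (prod.map t (𝟙 X)) := by
      rw [← he_left, prod.map_map, prod.lift_fst, Category.id_comp]
    rw [hΦ, hΨ, (e T _).apply_eq_iff_eq]
  let s : equalizer Φ Ψ ⟶ J := equalizer.ι Φ Ψ ≫ prod.fst
  let u : equalizer Φ Ψ ⨯ X ⟶ M := (e _ M).symm (equalizer.ι Φ Ψ ≫ prod.snd)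
  have hι : prod.lift s (equalizer.ι Φ Ψ ≫ prod.snd) = equalizer.ι Φ Ψ := by ext <;> simp [s]
  have hu : u ≫ k = prod.map s (𝟙 X) := by
    refine (hΦΨ s (equalizer.ι Φ Ψ ≫ prod.snd)).1 ?_
    rw [hι, equalizer.condition]
  refine ⟨equalizer Φ Ψ, s, u, hu, fun W' _ w' l' hl' => ?_⟩
  have hcond := (hΦΨ w' (e W' M l')).2 (by rwa [Equiv.symm_apply_apply])
  refine ⟨equalizer.lift _ hcond, by simp [s], (e _ M).injective ?_⟩
  rw [he_left, Equiv.apply_symm_apply, equalizer.lift_ι_assoc, prod.lift_snd]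

lemma IsWeakPi.precomp_regEpi {P : Set E} (hP : ∀ Z ∈ P, RegProjective Z) {M J X S W : E}
    {k : M ⟶ J ⨯ X} {s : S ⟶ J} {u : S ⨯ X ⟶ M} (h : IsWeakPi Set.univ k s u) {c : W ⟶ S}
    (hc : RegEpi c) : IsWeakPi P k (c ≫ s) (prod.map c (𝟙 X) ≫ u) := by
  refine ⟨by simp [h.1], fun W' hW' w' l' hl' => ?_⟩
  obtain ⟨g, hgs, hgu⟩ := h.2 (Set.mem_univ W') w' l' hl'
  obtain ⟨α, rfl⟩ := hP W' hW' c hc g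
  exact ⟨α, by simpa using hgs, by simpa using hgu⟩

lemma hasWeakPis_of_cartesianClosedP {P : Set E} (hP : IsProjectiveCover P)
    (hCC : CartesianClosedP E) : HasWeakPis P := by
  intro J X _ _ M k
  obtain ⟨S, s, u, h⟩ := hCC.exists_isWeakPi_univ k
  obtain ⟨W, hW, c, hc⟩ := hP.2 S
  exact ⟨W, hW, _, _, h.precomp_regEpi hP.1 hc⟩

end CartesianClosed

section Quotient

variable [HasFiniteLimits E]

lemma isEquivRelPair_of_forall_iff {R A : E} (m : R ⟶ A ⨯ A) [Mono m]
    (r : ∀ ⦃T : E⦄, (T ⟶ A) → (T ⟶ A) → Prop)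
    (hm : ∀ ⦃T : E⦄ (a b : T ⟶ A), (∃ s, s ≫ m = prod.lift a b) ↔ r a b)
    (hrefl : ∀ ⦃T : E⦄ (a : T ⟶ A), r a a) (hsymm : ∀ ⦃T : E⦄ (a b : T ⟶ A), r a b → r b a)
    (htrans : ∀ ⦃T : E⦄ (a b c : T ⟶ A), r a b → r b c → r a c) :
    IsEquivRelPair (m ≫ prod.fst) (m ≫ prod.snd) := by
  have hr : ∀ ⦃T : E⦄ (x : T ⟶ R), r (x ≫ m ≫ prod.fst) (x ≫ m ≫ prod.snd) :=
    fun T x => (hm _ _).1 ⟨x, by ext <;> simp⟩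
  refine ⟨fun T x y h₁ h₂ => ?_, ?_, ?_, fun T x y hxy => ?_⟩
  · rw [← cancel_mono m]
    ext <;> simpa
  · obtain ⟨d, hd⟩ := (hm _ _).2 (hrefl (𝟙 A))
    exact ⟨d, by simp [reassoc_of% hd], by simp [reassoc_of% hd]⟩
  · obtain ⟨s, hs⟩ := (hm _ _).2 (hsymm _ _ (hr (𝟙 R)))
    exact ⟨s, by simpa using hs =≫ prod.fst, by simpa using hs =≫ prod.snd⟩
  · have hy := hr y
    rw [← hxy] at hy
    obtain ⟨s, hs⟩ := (hm _ _).2 (htrans _ _ _ (hr x) hy)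
    exact ⟨s, by simpa using hs =≫ prod.fst, by simpa using hs =≫ prod.snd⟩

lemma IsExact.exists_quotient (hE : IsExact E) {R A : E} (m : R ⟶ A ⨯ A) [Mono m]
    (r : ∀ ⦃T : E⦄, (T ⟶ A) → (T ⟶ A) → Prop)
    (hm : ∀ ⦃T : E⦄ (a b : T ⟶ A), (∃ s, s ≫ m = prod.lift a b) ↔ r a b)
    (hrefl : ∀ ⦃T : E⦄ (a : T ⟶ A), r a a) (hsymm : ∀ ⦃T : E⦄ (a b : T ⟶ A), r a b → r b a)
    (htrans : ∀ ⦃T : E⦄ (a b c : T ⟶ A), r a b → r b c → r a c) :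
    ∃ (Q : E) (q : A ⟶ Q), RegEpi q ∧ ∀ ⦃T : E⦄ (a b : T ⟶ A), a ≫ q = b ≫ q ↔ r a b := by
  obtain ⟨Q, q, w, ⟨hq⟩, hker⟩ :=
    hE.effective _ _ (isEquivRelPair_of_forall_iff m r hm hrefl hsymm htrans)
  refine ⟨Q, q, regEpi_of_isColimit hq, fun T a b => ⟨fun h => ?_, fun h => ?_⟩⟩
  · exact (hm a b).1 ⟨hker.lift a b h, by ext <;> simp⟩
  · obtain ⟨s, hs⟩ := (hm a b).2 h
    have ha : a = s ≫ m ≫ prod.fst := by simp [reassoc_of% hs]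
    have hb : b = s ≫ m ≫ prod.snd := by simp [reassoc_of% hs]
    rw [ha, hb]
    simpa using s ≫= w

lemma exists_comp_pullback_snd_iff {R Y Z T : E} (r : R ⟶ Z) (f : Y ⟶ Z) (a : T ⟶ Y) :
    (∃ s, s ≫ pullback.snd r f = a) ↔ ∃ s, s ≫ r = a ≫ f :=
  ⟨fun ⟨s, hs⟩ => ⟨s ≫ pullback.fst r f, by simp [pullback.condition, ← hs]⟩,
    fun ⟨s, hs⟩ => ⟨pullback.lift s a hs, by simp⟩⟩

end Quotient

section Forall

variable [HasFiniteLimits E] {P : Set E} (hE : IsExact E) (hP : IsProjectiveCover P)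
  (h : HasWeakPis P)
include hE hP h

/-- Universal quantification along `J ⨯ X ⟶ J`, obtained as the image of the weak dependent
product of a `P`-presentation of `S`. -/
lemma exists_forall_of_mono {S J X : E} (m : S ⟶ J ⨯ X) [Mono m] :
    ∃ (A : E) (a : A ⟶ J), Mono a ∧ ∀ ⦃T : E⦄ (τ : T ⟶ J),
      (∃ s, s ≫ a = τ) ↔ ∃ k : T ⨯ X ⟶ S, k ≫ m = prod.map τ (𝟙 X) := by
  obtain ⟨J0, hJ0, bJ, hbJ⟩ := hP.2 J
  obtain ⟨X0, hX0, bX, hbX⟩ := hP.2 X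
  obtain ⟨W, -, w, l, hl⟩ := h hJ0 hX0 (pullback.snd m (prod.map bJ bX))
  obtain ⟨A, e, a, he, ha, hea⟩ := hE.factor (w ≫ bJ)
  refine ⟨A, a, ha, fun T τ => ⟨?_, ?_⟩⟩
  · rintro ⟨s, rfl⟩
    obtain ⟨κ, hκ⟩ : ∃ κ : A ⨯ X ⟶ S, κ ≫ m = prod.map a (𝟙 X) := by
      refine (hE.regEpi_prodMap he hbX).exists_fac_of_mono (a := l ≫ pullback.fst _ _) ?_
      rw [Category.assoc, pullback.condition, reassoc_of% hl.1]
      simp [← hea]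
    exact ⟨prod.map s (𝟙 X) ≫ κ, by simp [hκ]⟩
  · rintro ⟨k, hk⟩
    obtain ⟨T0, hT0, c, hc⟩ := hP.2 T
    obtain ⟨w', hw'⟩ := hP.1 T0 hT0 bJ hbJ (c ≫ τ)
    obtain ⟨α, hα, -⟩ := hl.2 hT0 w'
      (pullback.lift (prod.map c bX ≫ k) (prod.map w' (𝟙 X0)) (by simp [hk, hw']))
      (pullback.lift_snd _ _ _)
    exact hc.exists_fac_of_mono (a := α ≫ e) (by rw [Category.assoc, hea, reassoc_of% hα, hw'])

lemma exists_mono_factors_iff_prodMap_eq {J X B : E} (f g : J ⨯ X ⟶ B) :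
    ∃ (A : E) (a : A ⟶ J), Mono a ∧ ∀ ⦃T : E⦄ (τ : T ⟶ J),
      (∃ s, s ≫ a = τ) ↔ prod.map τ (𝟙 X) ≫ f = prod.map τ (𝟙 X) ≫ g := by
  obtain ⟨A, a, ha, hA⟩ := exists_forall_of_mono hE hP h (equalizer.ι f g)
  refine ⟨A, a, ha, fun T τ => (hA τ).trans ⟨?_, fun hτ => ⟨equalizer.lift _ hτ, by simp⟩⟩⟩
  rintro ⟨k, hk⟩
  rw [← hk, Category.assoc, Category.assoc, equalizer.condition]

end Forall

lemma exists_isQuasiExponential [HasFiniteLimits E] {P : Set E} (hP : IsProjectiveCover P)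
    (h : HasWeakPis P) {X : E} (hX : X ∈ P) (B : E) :
    ∃ (W : E) (ev : W ⨯ X ⟶ B), IsQuasiExponential P X W ev := by
  obtain ⟨One, hOne, t, ht⟩ := hP.2 (⊤_ E)
  obtain ⟨W, -, w, l, hl⟩ := h hOne hX (prod.fst : (One ⨯ X) ⨯ B ⟶ One ⨯ X)
  refine ⟨W, l ≫ prod.snd, fun Z hZ d => ?_⟩
  obtain ⟨w', -⟩ := hP.1 Z hZ t ht (terminal.from Z)
  obtain ⟨α, -, hα⟩ := hl.2 hZ w' (prod.lift (prod.map w' (𝟙 X)) d) (prod.lift_fst _ _)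
  exact ⟨α, by rw [← Category.assoc, hα, prod.lift_snd]⟩

section ExtEq

variable [HasFiniteLimits E] {X X0 W B : E} (bX : X0 ⟶ X) (ev : W ⨯ X0 ⟶ B)

/-- `a` and `b` are equal as functions on `X`, read through `ev` on the cover `bX` of `X`:
`ev (a, x₁) = ev (b, x₂)` whenever `x₁` and `x₂` lie over the same point of `X`. -/
def ExtEq {T : E} (a b : T ⟶ W) : Prop :=
  ∀ ⦃T' : E⦄ (c : T' ⟶ T) (x₁ x₂ : T' ⟶ X0), x₁ ≫ bX = x₂ ≫ bX →
    prod.lift (c ≫ a) x₁ ≫ ev = prod.lift (c ≫ b) x₂ ≫ ev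

variable {bX ev}

lemma ExtEq.symm {T : E} {a b : T ⟶ W} (h : ExtEq bX ev a b) : ExtEq bX ev b a :=
  fun _ c x₁ x₂ hx => (h c x₂ x₁ hx.symm).symm

lemma ExtEq.trans {T : E} {a b c : T ⟶ W} (hab : ExtEq bX ev a b) (hbc : ExtEq bX ev b c) :
    ExtEq bX ev a c :=
  fun _ d x₁ x₂ hx => (hab d x₁ x₂ hx).trans (hbc d x₂ x₂ rfl)

lemma extEq_iff_prodMap {T : E} (a b : T ⟶ W) :
    ExtEq bX ev a b ↔
      prod.map a (pullback.fst bX bX) ≫ ev = prod.map b (pullback.snd bX bX) ≫ ev := by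
  constructor
  · intro h
    simpa using h prod.fst (prod.snd ≫ pullback.fst bX bX) (prod.snd ≫ pullback.snd bX bX)
      (by simp [pullback.condition])
  · intro h T' c x₁ x₂ hx
    simpa using prod.lift c (pullback.lift x₁ x₂ hx) ≫= h

lemma extEq_of_eq {T T₀ : E} {a b : T ⟶ W} (φ : T ⟶ T₀) (d : T₀ ⨯ X ⟶ B)
    (ha : prod.map a (𝟙 X0) ≫ ev = prod.map φ bX ≫ d)
    (hb : prod.map b (𝟙 X0) ≫ ev = prod.map φ bX ≫ d) : ExtEq bX ev a b := by
  intro T' c x₁ x₂ hx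
  have h₁ := prod.lift c x₁ ≫= ha
  have h₂ := prod.lift c x₂ ≫= hb
  simp only [prod.lift_map_assoc, Category.comp_id] at h₁ h₂
  rw [h₁, h₂, hx]

variable (bX ev) {P : Set E} (hE : IsExact E) (hP : IsProjectiveCover P) (h : HasWeakPis P)
include hE hP h

lemma exists_mono_extEq :
    ∃ (R : E) (r : R ⟶ W ⨯ W), Mono r ∧
      ∀ ⦃T : E⦄ (a b : T ⟶ W), (∃ s, s ≫ r = prod.lift a b) ↔ ExtEq bX ev a b := by
  obtain ⟨R, r, hr, hR⟩ := exists_mono_factors_iff_prodMap_eq hE hP h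
    (prod.map prod.fst (pullback.fst bX bX) ≫ ev) (prod.map prod.snd (pullback.snd bX bX) ≫ ev)
  refine ⟨R, r, hr, fun T a b => (hR _).trans ?_⟩
  rw [extEq_iff_prodMap]
  simp

/-- The functions `W' ⊆ W` that are well defined on `X`, and their quotient `Ex` by
extensional equality. -/
lemma exists_quotient_extEq :
    ∃ (W' : E) (i : W' ⟶ W) (Ex : E) (t : W' ⟶ Ex),
      (∀ ⦃T : E⦄ (a : T ⟶ W), (∃ s, s ≫ i = a) ↔ ExtEq bX ev a a) ∧ RegEpi t ∧
      ∀ ⦃T : E⦄ (a b : T ⟶ W'), a ≫ t = b ≫ t ↔ ExtEq bX ev (a ≫ i) (b ≫ i) := by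
  obtain ⟨R, r, hr, hR⟩ := exists_mono_extEq bX ev hE hP h
  let i := pullback.snd r (prod.lift (𝟙 W) (𝟙 W))
  have hi : ∀ ⦃T : E⦄ (a : T ⟶ W), (∃ s, s ≫ i = a) ↔ ExtEq bX ev a a := fun T a => by
    rw [exists_comp_pullback_snd_iff, ← hR]
    simp
  obtain ⟨Ex, t, ht, hteq⟩ := hE.exists_quotient (pullback.snd r (prod.map i i))
    (fun T a b => ExtEq bX ev (a ≫ i) (b ≫ i))
    (fun T a b => by rw [exists_comp_pullback_snd_iff, ← hR]; simp)
    (fun T a => (hi _).1 ⟨a, rfl⟩) (fun T a b => ExtEq.symm) (fun T a b c => ExtEq.trans)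
  exact ⟨_, i, Ex, t, hi, ht, hteq⟩

end ExtEq

section Exponential

variable [HasFiniteLimits E] {P : Set E} {X X0 W W' Ex B : E} {bX : X0 ⟶ X}
  {ev₀ : W ⨯ X0 ⟶ B} {i : W' ⟶ W} {t : W' ⟶ Ex} {ev : Ex ⨯ X ⟶ B}

lemma prodMap_comp_eval (hev : prod.map t bX ≫ ev = prod.map i (𝟙 X0) ≫ ev₀) {T : E}
    (s : T ⟶ W') : prod.map (s ≫ i) (𝟙 X0) ≫ ev₀ = prod.map (s ≫ t) bX ≫ ev := by
  rw [← Category.id_comp bX, ← prod.map_map, Category.assoc, hev, prod.map_map_assoc,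
    Category.comp_id]

variable (hE : IsExact E) (hP : IsProjectiveCover P) (hbX : RegEpi bX)
  (hteq : ∀ ⦃T : E⦄ (a b : T ⟶ W'), a ≫ t = b ≫ t ↔ ExtEq bX ev₀ (a ≫ i) (b ≫ i))
  (hev : prod.map t bX ≫ ev = prod.map i (𝟙 X0) ≫ ev₀)
include hP hteq hev

lemma injective_eval (ht : RegEpi t) (T : E) :
    Function.Injective fun g : T ⟶ Ex => prod.map g (𝟙 X) ≫ ev := by
  intro g₁ g₂ hg
  dsimp only at hg
  obtain ⟨T0, hT0, u, hu⟩ := hP.2 T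
  have := hu.epi
  obtain ⟨s₁, hs₁⟩ := hP.1 T0 hT0 t ht (u ≫ g₁)
  obtain ⟨s₂, hs₂⟩ := hP.1 T0 hT0 t ht (u ≫ g₂)
  have heval : ∀ {s : T0 ⟶ W'} {g : T ⟶ Ex}, s ≫ t = u ≫ g →
      prod.map (s ≫ i) (𝟙 X0) ≫ ev₀ = prod.map u bX ≫ prod.map g (𝟙 X) ≫ ev := by
    intro s g hs
    rw [prodMap_comp_eval hev, hs, prod.map_map_assoc, Category.comp_id]
  have hext := extEq_of_eq u _ (heval hs₁) ((heval hs₂).trans (by rw [← hg]))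
  rw [← cancel_epi u, ← hs₁, ← hs₂]
  exact (hteq s₁ s₂).2 hext

include hE hbX

lemma surjective_eval (hq : IsQuasiExponential P X0 W ev₀)
    (hi : ∀ ⦃T : E⦄ (a : T ⟶ W), (∃ s, s ≫ i = a) ↔ ExtEq bX ev₀ a a) (T : E) :
    Function.Surjective fun g : T ⟶ Ex => prod.map g (𝟙 X) ≫ ev := by
  intro d
  obtain ⟨T0, hT0, u, hu⟩ := hP.2 T
  obtain ⟨g, hg⟩ := hq hT0 (prod.map u bX ≫ d)
  obtain ⟨g', rfl⟩ := (hi g).2 (extEq_of_eq u d hg hg)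
  have hcomp : ∀ {T' : E} (c : T' ⟶ T0),
      prod.map (c ≫ g' ≫ i) (𝟙 X0) ≫ ev₀ = prod.map (c ≫ u) bX ≫ d := by
    intro T' c
    simpa using prod.map c (𝟙 X0) ≫= hg
  obtain ⟨g₀, hg₀⟩ := hu.exists_desc (g' ≫ t) fun T' c₁ c₂ hc => by
    simpa using (hteq (c₁ ≫ g') (c₂ ≫ g')).2
      (extEq_of_eq (c₁ ≫ u) d (by simpa using hcomp c₁) (by simpa [hc] using hcomp c₂))
  refine ⟨g₀, ?_⟩
  have := (hE.regEpi_prodMap hu hbX).epi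
  rw [← cancel_epi (prod.map u bX)]
  dsimp only
  rw [prod.map_map_assoc, Category.comp_id, hg₀, ← prodMap_comp_eval hev, hg]

end Exponential

section WeakPisCartesianClosed

variable [HasFiniteLimits E]

lemma cartesianClosedP_of_exponentials
    (h : ∀ X B : E, ∃ (Ex : E) (ev : Ex ⨯ X ⟶ B), ∀ T : E,
      Function.Bijective fun g : T ⟶ Ex => prod.map g (𝟙 X) ≫ ev) :
    CartesianClosedP E := by
  intro X
  choose Ex ev hev using h X
  let e : ∀ T B, ((prod.functor.flip.obj X).obj T ⟶ B) ≃ (T ⟶ Ex B) := fun T B =>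
    (Equiv.ofBijective _ (hev B T)).symm
  have he : ∀ T B (y : T ⟶ Ex B), e T B (prod.map y (𝟙 X) ≫ ev B) = y := fun T B =>
    (Equiv.ofBijective _ (hev B T)).symm_apply_apply
  refine ⟨_, ⟨Adjunction.adjunctionOfEquivRight e fun T' T B f g => ?_⟩⟩
  obtain ⟨y, rfl⟩ := (hev B T).2 g
  change e T' B (prod.map f (𝟙 X) ≫ prod.map y (𝟙 X) ≫ ev B) = f ≫ e T B (prod.map y (𝟙 X) ≫ ev B)
  rw [he T B y, ← he T' B (f ≫ y)]
  congr 1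
  erw [prod.map_map_assoc, Category.comp_id]
  rfl

lemma exists_exponential {P : Set E} (hE : IsExact E) (hP : IsProjectiveCover P)
    (h : HasWeakPis P) (X B : E) :
    ∃ (Ex : E) (ev : Ex ⨯ X ⟶ B), ∀ T : E,
      Function.Bijective fun g : T ⟶ Ex => prod.map g (𝟙 X) ≫ ev := by
  obtain ⟨X0, hX0, bX, hbX⟩ := hP.2 X
  obtain ⟨W, ev₀, hq⟩ := exists_isQuasiExponential hP h hX0 B
  obtain ⟨W', i, Ex, t, hi, ht, hteq⟩ := exists_quotient_extEq bX ev₀ hE hP h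
  obtain ⟨ev, hev⟩ := (hE.regEpi_prodMap ht hbX).exists_desc (prod.map i (𝟙 X0) ≫ ev₀)
    fun T g₁ g₂ hg => by
      have hlift : ∀ g : T ⟶ W' ⨯ X0,
          g ≫ prod.map i (𝟙 X0) ≫ ev₀ = prod.lift (g ≫ prod.fst ≫ i) (g ≫ prod.snd) ≫ ev₀ :=
        fun g => by rw [← Category.assoc]; congr 1; ext <;> simp
      have h₁ := (hteq (g₁ ≫ prod.fst) (g₂ ≫ prod.fst)).1 (by simpa using hg =≫ prod.fst)
      rw [hlift, hlift]
      simpa using h₁ (𝟙 T) (g₁ ≫ prod.snd) (g₂ ≫ prod.snd) (by simpa using hg =≫ prod.snd)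
  exact ⟨Ex, ev, fun T => ⟨injective_eval hP hteq hev ht T,
    surjective_eval hE hP hbX hteq hev hq hi T⟩⟩

lemma cartesianClosedP_of_hasWeakPis {P : Set E} (hE : IsExact E) (hP : IsProjectiveCover P)
    (h : HasWeakPis P) : CartesianClosedP E :=
  cartesianClosedP_of_exponentials (exists_exponential hE hP h)

end WeakPisCartesianClosed

/-- `E` is cartesian closed iff `P` has generalised weak simple
products. -/
theorem stmt15 {E : Type u} [Category.{v} E] [HasFiniteLimits E]
    (hE : IsExact E) (P : Set E) (hP : IsProjectiveCover P) :
    CartesianClosedP E ↔ HasGWSP P :=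
  calc CartesianClosedP E ↔ HasWeakPis P :=
        ⟨hasWeakPis_of_cartesianClosedP hP, cartesianClosedP_of_hasWeakPis hE hP⟩
    _ ↔ HasGWSP P := ⟨hasGWSP_of_hasWeakPis hE hP, hasWeakPis_of_hasGWSP hE hP⟩

end ExComp
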